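/- arXiv:1804.07065 — 4 statements merged into one kernel-verified Lean document; each statement's English description precedes it below -/
import Mathlib

section
/- For nonnegative integers n, m, x with 0 ≤ x ≤ min(n,m) and real θ > 0, the quantities P(x) = x! · C(n,x) · C(m,x) · (θ+x)^{(m-x)} / (θ+n)^{(m)} sum to 1 over x from 0 to min(n,m), where y^{(k)} denotes the rising factorial y(y+1)···(y+k-1). -/
open Finset

/-- Rising factorial `a^{(k)} = a(a+1)⋯(a+k-1)`. -/
noncomputable def rise (a : ℝ) (k : ℕ) : ℝ := ∏ i ∈ Finset.range k, (a + i)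

/-- Falling factorial `a^{[k]} = a(a-1)⋯(a-k+1)`. -/
noncomputable def fall (a : ℝ) (k : ℕ) : ℝ := ∏ i ∈ Finset.range k, (a - i)

lemma rise_zero (a : ℝ) : rise a 0 = 1 := by simp [rise]

lemma rise_succ_right (a : ℝ) (k : ℕ) : rise a (k + 1) = rise a k * (a + k) := by
  simp [rise, Finset.prod_range_succ]

lemma rise_succ_left (a : ℝ) (k : ℕ) : rise a (k + 1) = a * rise (a + 1) k := by
  rw [rise, Finset.prod_range_succ']
  simp [rise]
  rw [mul_comm]
  congr 1
  apply Finset.prod_congr rfl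
  intro i _
  push_cast
  ring

lemma rise_pos {a : ℝ} (ha : 0 < a) (k : ℕ) : 0 < rise a k := by
  apply Finset.prod_pos
  intro i _
  positivity

lemma fall_zero_of_lt (n x : ℕ) (h : n < x) : fall n x = 0 := by
  apply Finset.prod_eq_zero (i := n) (by simpa using h)
  simp

lemma fall_eq_descFactorial (n x : ℕ) (h : x ≤ n) :
    fall n x = (n.descFactorial x : ℝ) := by
  rw [Nat.descFactorial_eq_prod_range, Nat.cast_prod, fall]
  apply Finset.prod_congr rfl
  intro i hi
  simp only [Finset.mem_range] at hi
  have : i ≤ n := by omega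
  push_cast [this]
  ring

lemma fall_eq (n x : ℕ) : fall n x = (x.factorial : ℝ) * (n.choose x) := by
  rcases le_or_gt x n with h | h
  · rw [fall_eq_descFactorial n x h, Nat.descFactorial_eq_factorial_mul_choose]
    push_cast; ring
  · rw [fall_zero_of_lt n x h, Nat.choose_eq_zero_of_lt h]
    simp

lemma fall_succ_nat (n x : ℕ) :
    fall (n + 1 : ℕ) (x : ℕ) = fall n x + x * fall n (x - 1) := by
  cases x with
  | zero => simp [fall]
  | succ y =>
    simp only [Nat.add_sub_cancel]
    rw [fall_eq, fall_eq, fall_eq]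
    rcases le_or_gt (y + 1) n with h | h
    · have h1 : (y + 1).factorial = (y + 1) * y.factorial := by simp [Nat.factorial_succ]
      have := Nat.choose_succ_succ (n) (y)
      -- (n+1).choose (y+1) = n.choose y + n.choose (y+1)
      push_cast [Nat.choose_succ_succ n y, h1, Nat.factorial_succ]
      ring
    · rcases le_or_gt (y + 1) (n + 1) with h2 | h2
      · have hy : y = n := by omega
        subst hy
        simp [Nat.choose_eq_zero_of_lt (by omega : y < y + 1), Nat.choose_self,
          Nat.choose_succ_self_right, Nat.factorial_succ]
      · rw [Nat.choose_eq_zero_of_lt (by omega), Nat.choose_eq_zero_of_lt (by omega),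
          Nat.choose_eq_zero_of_lt (by omega)]
        simp

lemma key : ∀ (n m : ℕ) (θ : ℝ),
    ∑ x ∈ Finset.range (m + 1), (m.choose x : ℝ) * fall n x * rise (θ + x) (m - x)
      = rise (θ + n) m := by
  intro n
  induction n with
  | zero =>
    intro m θ
    rw [Finset.sum_eq_single 0]
    · simp [fall, rise]
    · intro x _ hx
      rw [fall_zero_of_lt 0 x (by omega)]
      ring
    · intro h; simp at h
  | succ n ih =>
    intro m θ
    have hsplit : ∀ x : ℕ, (m.choose x : ℝ) * fall (n + 1 : ℕ) x * rise (θ + x) (m - x)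
        = (m.choose x : ℝ) * fall n x * rise (θ + x) (m - x)
          + (m.choose x : ℝ) * (x * fall n (x - 1)) * rise (θ + x) (m - x) := by
      intro x
      rw [fall_succ_nat]
      ring
    rw [Finset.sum_congr rfl (fun x _ => hsplit x), Finset.sum_add_distrib, ih m θ]
    cases m with
    | zero =>
      simp [rise_zero, fall, rise]
    | succ m' =>
      have h2 : ∑ x ∈ Finset.range (m' + 1 + 1),
          ((m' + 1).choose x : ℝ) * (x * fall n (x - 1)) * rise (θ + x) (m' + 1 - x)
          = (m' + 1 : ℝ) * rise ((θ + 1) + n) m' := by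
        rw [Finset.sum_range_succ']
        simp only [Nat.cast_zero, mul_zero, zero_mul, mul_zero, add_zero]
        rw [← ih m' (θ + 1), Finset.mul_sum]
        apply Finset.sum_congr rfl
        intro y _
        have hc : ((m' + 1).choose (y + 1) : ℝ) * (y + 1) = (m' + 1) * m'.choose y := by
          have := Nat.add_one_mul_choose_eq m' y
          have : ((m' + 1) * m'.choose y : ℕ) = ((m' + 1).choose (y + 1) * (y + 1) : ℕ) := this
          exact_mod_cast congrArg (Nat.cast (R := ℝ)) this.symm
        have harg : θ + (↑(y + 1) : ℝ) = (θ + 1) + y := by push_cast; ring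
        have hsub : m' + 1 - (y + 1) = m' - y := by omega
        rw [harg, hsub]
        simp only [Nat.add_sub_cancel]
        calc ((m' + 1).choose (y + 1) : ℝ) * ((↑(y + 1)) * fall n y) * rise (θ + 1 + y) (m' - y)
            = (((m' + 1).choose (y + 1) : ℝ) * (y + 1)) * fall n y * rise (θ + 1 + y) (m' - y) := by
              push_cast; ring
          _ = (m' + 1 : ℝ) * ((m'.choose y : ℝ) * fall n y * rise (θ + 1 + y) (m' - y)) := by
              rw [hc]; ring
      rw [h2]
      have e1 : rise (θ + n) (m' + 1) = (θ + n) * rise (θ + n + 1) m' := rise_succ_left _ _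
      have e2 : rise (θ + (n + 1 : ℕ)) (m' + 1) = rise (θ + n + 1) m' * (θ + n + 1 + m') := by
        push_cast
        rw [rise_succ_right]
        push_cast
        ring_nf
      have e3 : (θ + 1) + (n : ℝ) = θ + n + 1 := by ring
      rw [e1, e2, e3]
      ring

theorem stmt_0 (n m : ℕ) (θ : ℝ) (hθ : 0 < θ) :
    ∑ x ∈ Finset.range (min n m + 1),
      (x.factorial : ℝ) * (n.choose x) * (m.choose x) * rise (θ + x) (m - x)
        / rise (θ + n) m = 1 := by
  have hD : 0 < rise (θ + n) m := rise_pos (by positivity) m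
  rw [← Finset.sum_div]
  rw [div_eq_one_iff_eq (ne_of_gt hD)]
  have hext : ∑ x ∈ Finset.range (min n m + 1),
      (x.factorial : ℝ) * (n.choose x) * (m.choose x) * rise (θ + x) (m - x)
      = ∑ x ∈ Finset.range (m + 1),
      (x.factorial : ℝ) * (n.choose x) * (m.choose x) * rise (θ + x) (m - x) := by
    apply Finset.sum_subset
    · apply Finset.range_subset_range.2; omega
    · intro x hx hx'
      simp only [Finset.mem_range] at hx hx'
      have : n < x := by omega
      rw [Nat.choose_eq_zero_of_lt this]
      simp
  rw [hext, ← key n m θ]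
  apply Finset.sum_congr rfl
  intro x _
  rw [fall_eq]
  ring
end

section
/- For nonnegative integers n, m, l, r with rl ≤ m and r ≤ n and real θ > 0, the r-th falling factorial moment of R_{l,n,m} equals m!·r!·C(n,r)·(θ+n-r)^{(m-rl)} / ((m-rl)!·(θ+n)^{(m)}), where R_{l,n,m} has distribution P(R_{l,n,m}=x) = (m!/(θ+n)^{(m)})·Σ_{i=x}^{min(n,⌊m/l⌋)} (-1)^{i-x}·C(i,x)·C(n,i)·(θ+n-i)^{(m-il)}/(m-il)!. That is, Σ_x x^{[r]}·P(R_{l,n,m}=x) = m!·r!·C(n,r)·(θ+n-r)^{(m-rl)}/((m-rl)!·(θ+n)^{(m)}). -/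
open Finset

/-!
The factorial moments invert the inclusion–exclusion formula defining the distribution. Exchanging
the two sums, the coefficient of the `i`-th term is `∑ₓ x^{[r]} (-1)^{i-x} C(i,x)`, which is `r!`
times the `i`-th forward difference at `0` of `x ↦ C(x,r)`, i.e. `r!·[i = r]`. Only the term
`i = r` survives.
-/

lemma fall_natCast (x r : ℕ) : fall (x : ℝ) r = x.descFactorial r := by
  rw [fall, ← descPochhammer_eval_eq_prod_range, descPochhammer_eval_eq_descFactorial]

lemma sum_fall_mul_alternating_choose (i r : ℕ) :
    ∑ x ∈ range (i + 1), fall (x : ℝ) r * ((-1 : ℝ) ^ (i - x) * i.choose x)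
      = if i = r then (r.factorial : ℝ) else 0 := by
  have hΔ := fwdDiff_iter_choose_zero r i
  rw [fwdDiff_iter_eq_sum_shift] at hΔ
  have hΔℝ : ∑ x ∈ range (i + 1), (-1 : ℝ) ^ (i - x) * i.choose x * x.choose r
      = if i = r then 1 else 0 := by
    simpa using congrArg (Int.cast : ℤ → ℝ) hΔ
  simp_rw [fall_natCast, Nat.descFactorial_eq_factorial_mul_choose]
  calc _ = (r.factorial : ℝ) *
        ∑ x ∈ range (i + 1), (-1 : ℝ) ^ (i - x) * i.choose x * x.choose r := by
        rw [mul_sum]; push_cast; exact sum_congr rfl fun _ _ ↦ by ring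
    _ = _ := by rw [hΔℝ]; simp

theorem sum_fall_mul_sum_alternating_choose (N r : ℕ) (hr : r ≤ N) (w : ℕ → ℝ) :
    ∑ x ∈ range (N + 1), fall (x : ℝ) r *
        ∑ i ∈ Icc x N, (-1 : ℝ) ^ (i - x) * i.choose x * w i
      = r.factorial * w r := by
  simp_rw [mul_sum]
  rw [sum_comm' (t' := range (N + 1)) (s' := fun i ↦ range (i + 1))
    (by intro x i; simp only [mem_range, mem_Icc]; omega)]
  calc _ = ∑ i ∈ range (N + 1),
        (∑ x ∈ range (i + 1), fall (x : ℝ) r * ((-1 : ℝ) ^ (i - x) * i.choose x)) * w i := by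
        simp_rw [sum_mul, mul_assoc]
    _ = _ := by
        simp_rw [sum_fall_mul_alternating_choose, ite_mul, zero_mul]
        rw [sum_ite_eq', if_pos (mem_range.mpr (by omega))]

theorem stmt_6_general (n m l r : ℕ) (hl : 1 ≤ l) (hrl : r * l ≤ m) (hr : r ≤ n)
    (θ : ℝ) :
    ∑ x ∈ Finset.range (min n (m / l) + 1),
      fall (x : ℝ) r *
        ((m.factorial : ℝ) / rise (θ + n) m *
          ∑ i ∈ Finset.Icc x (min n (m / l)),
            (-1 : ℝ) ^ (i - x) * (i.choose x : ℝ) * (n.choose i) *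
              rise (θ + n - i) (m - i * l) / ((m - i * l).factorial))
    = (m.factorial : ℝ) * (r.factorial : ℝ) * (n.choose r) *
        rise (θ + n - r) (m - r * l)
        / ((m - r * l).factorial * rise (θ + n) m) := by
  have hrN : r ≤ min n (m / l) := le_min hr ((Nat.le_div_iff_mul_le hl).mpr hrl)
  set w : ℕ → ℝ := fun i ↦ n.choose i * rise (θ + n - i) (m - i * l) / (m - i * l).factorial
  calc _ = (m.factorial : ℝ) / rise (θ + n) m * ∑ x ∈ range (min n (m / l) + 1),
        fall (x : ℝ) r * ∑ i ∈ Icc x (min n (m / l)), (-1 : ℝ) ^ (i - x) * i.choose x * w i := by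
        rw [mul_sum]
        refine sum_congr rfl fun x _ ↦ ?_
        rw [mul_left_comm]
        congr 2
        exact sum_congr rfl fun i _ ↦ by simp only [w]; ring
    _ = (m.factorial : ℝ) / rise (θ + n) m * (r.factorial * w r) := by
        rw [sum_fall_mul_sum_alternating_choose _ r hrN]
    _ = _ := by simp only [w]; ring

theorem stmt_6 (n m l r : ℕ) (hl : 1 ≤ l) (hrl : r * l ≤ m) (hr : r ≤ n)
    (θ : ℝ) (hθ : 0 < θ) :
    ∑ x ∈ Finset.range (min n (m / l) + 1),
      fall (x : ℝ) r *
        ((m.factorial : ℝ) / rise (θ + n) m *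
          ∑ i ∈ Finset.Icc x (min n (m / l)),
            (-1 : ℝ) ^ (i - x) * (i.choose x : ℝ) * (n.choose i) *
              rise (θ + n - i) (m - i * l) / ((m - i * l).factorial))
    = (m.factorial : ℝ) * (r.factorial : ℝ) * (n.choose r) *
        rise (θ + n - r) (m - r * l)
        / ((m - r * l).factorial * rise (θ + n) m) :=
  stmt_6_general n m l r hl hrl hr θ
end

section
/- For nonnegative integers n, m, l with l ≥ 1 and real θ > 0, the quantities P(x) = (m!/(θ+n)^{(m)})·Σ_{i=x}^{min(n,⌊m/l⌋)} (-1)^{i-x}·C(i,x)·C(n,i)·(θ+n-i)^{(m-il)}/(m-il)! sum to 1 over x from 0 to min(n, ⌊m/l⌋). -/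
open Finset

lemma alt_sum (i : ℕ) :
    ∑ x ∈ Finset.range (i + 1), (-1 : ℝ) ^ (i - x) * (i.choose x : ℝ)
      = if i = 0 then 1 else 0 := by
  rw [← Finset.sum_range_reflect]
  have : ∀ x ∈ Finset.range (i + 1),
      (-1 : ℝ) ^ (i - (i + 1 - 1 - x)) * (i.choose (i + 1 - 1 - x) : ℝ)
        = (-1 : ℝ) ^ x * (i.choose x : ℝ) := by
    intro x hx
    rw [Finset.mem_range] at hx
    have hx' : x ≤ i := Nat.lt_succ_iff.mp hx
    have h1 : i + 1 - 1 - x = i - x := by omega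
    have h2 : i - (i - x) = x := by omega
    rw [h1, h2, Nat.choose_symm hx']
  rw [Finset.sum_congr rfl this]
  have := Int.alternating_sum_range_choose (n := i)
  have := congrArg (fun z : ℤ => (z : ℝ)) this
  push_cast at this
  simpa using this

theorem stmt_7 (n m l : ℕ) (hl : 1 ≤ l) (θ : ℝ) (hθ : 0 < θ) :
    ∑ x ∈ Finset.range (min n (m / l) + 1),
      (m.factorial : ℝ) / rise (θ + n) m *
        ∑ i ∈ Finset.Icc x (min n (m / l)),
          (-1 : ℝ) ^ (i - x) * (i.choose x : ℝ) * (n.choose i) *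
            rise (θ + n - i) (m - i * l) / ((m - i * l).factorial)
    = 1 := by
  set N := min n (m / l) with hN
  have hpos : 0 < rise (θ + n) m := by
    apply Finset.prod_pos
    intro i _
    positivity
  rw [← Finset.mul_sum]
  have hswap :
      ∑ x ∈ Finset.range (N + 1), ∑ i ∈ Finset.Icc x N,
          (-1 : ℝ) ^ (i - x) * (i.choose x : ℝ) * (n.choose i) *
            rise (θ + n - i) (m - i * l) / ((m - i * l).factorial)
      = ∑ i ∈ Finset.range (N + 1), ∑ x ∈ Finset.range (i + 1),
          (-1 : ℝ) ^ (i - x) * (i.choose x : ℝ) * (n.choose i) *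
            rise (θ + n - i) (m - i * l) / ((m - i * l).factorial) := by
    apply Finset.sum_comm'
    intro x i
    simp only [Finset.mem_range, Finset.mem_Icc, Nat.lt_succ_iff]
    omega
  rw [hswap]
  have hinner : ∀ i ∈ Finset.range (N + 1),
      ∑ x ∈ Finset.range (i + 1),
          (-1 : ℝ) ^ (i - x) * (i.choose x : ℝ) * (n.choose i) *
            rise (θ + n - i) (m - i * l) / ((m - i * l).factorial)
      = (if i = 0 then (1:ℝ) else 0) * ((n.choose i) *
            rise (θ + n - i) (m - i * l) / ((m - i * l).factorial)) := by
    intro i _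
    rw [← alt_sum i, Finset.sum_mul]
    apply Finset.sum_congr rfl
    intro x _
    ring
  rw [Finset.sum_congr rfl hinner]
  simp only [ite_mul, zero_mul, one_mul]
  rw [Finset.sum_ite_eq' (Finset.range (N + 1)) 0]
  simp only [Finset.mem_range, if_pos (Nat.succ_pos N), Nat.choose_zero_right,
    Nat.cast_zero, Nat.cast_one, sub_zero, Nat.zero_mul, Nat.sub_zero, one_mul]
  field_simp
end

section
/- For nonnegative integers n, m, m', l, y, x, r with x ≤ min(y, m') and real θ > 0, the r-th falling factorial moment of the conditional distribution of R̃_{l,n,m'} given R_{l,n,m} = y equals Σ_{s=0}^{r} C(r,s)·(-1)^s·(y-s)^{[r-s]}·s!·C(y,s)·(θ+n+m-s(1+l))^{(m')}/(θ+n+m)^{(m')}, where the conditional distribution is P(R̃_{l,n,m'}=x | R_{l,n,m}=y) = (C(y,x)/(θ+n+m)^{(m')})·Σ_{i=y-x}^{y} (-1)^{i-(y-x)}·C(x, y-i)·(θ+n+m-i(1+l))^{(m')}. -/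
/-!
Write `c = θ + n + m`, `d = 1 + l` and `g t = (c - y d + t d)^{(m')}`. Substituting `k = y - i`,
the inner alternating sum is the forward difference `Δ^x g (0)`; since `g` is a polynomial of degree
`m'` these vanish for `x > m'`, so the range of `x` may be taken to be `0, …, y`. Then
`x^{[r]} C(y, x) = y^{[r]} C(y - r, x - r)` and the Gregory–Newton formula collapse the moment to
`y^{[r]} Δ^r g (y - r) = y^{[r]} Σ_s (-1)^s C(r, s) (c - s d)^{(m')}`.
-/

open Finset

theorem Nat.descFactorial_mul_choose_add (y r t : ℕ) :
    (r + t).descFactorial r * y.choose (r + t) = y.descFactorial r * (y - r).choose t := by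
  rw [Nat.descFactorial_eq_factorial_mul_choose, Nat.descFactorial_eq_factorial_mul_choose,
    mul_assoc, mul_assoc, mul_comm ((r + t).choose r), Nat.choose_mul (Nat.le_add_right r t),
    Nat.add_sub_cancel_left]

open fwdDiff

-- With all of Mathlib imported, `Δ_[h]^[n]` needs the space in `Δ_[h] ^[n]` to parse.
section FwdDiff

variable {M G : Type*} [AddCommMonoid M] [AddCommGroup G] (h : M) (f : M → G)

theorem fwdDiff_iter_eq_sum_shift_reflect (n : ℕ) (y : M) :
    Δ_[h] ^[n] f y = ∑ s ∈ range (n + 1), ((-1 : ℤ) ^ s * n.choose s) • f (y + (n - s) • h) := by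
  rw [fwdDiff_iter_eq_sum_shift, ← sum_range_reflect]
  refine sum_congr rfl fun s hs => ?_
  have hs : s ≤ n := Nat.lt_succ_iff.mp (mem_range.mp hs)
  rw [Nat.add_sub_cancel, Nat.sub_sub_self hs, Nat.choose_symm hs]

theorem sum_Icc_choose_smul_eq_fwdDiff_iter {x y : ℕ} (hxy : x ≤ y) :
    ∑ i ∈ Icc (y - x) y, ((-1 : ℤ) ^ (i - (y - x)) * x.choose (y - i)) • f ((y - i) • h)
      = Δ_[h] ^[x] f 0 := by
  rw [fwdDiff_iter_eq_sum_shift]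
  refine sum_nbij' (fun i => y - i) (fun k => y - k) ?_ ?_ ?_ ?_ ?_ <;>
    intro i hi <;> simp only [mem_Icc, mem_range] at hi ⊢
  · omega
  · omega
  · omega
  · omega
  · rw [zero_add, show i - (y - x) = x - (y - i) by omega]

theorem sum_descFactorial_mul_choose_smul_fwdDiff_iter (y r : ℕ) :
    ∑ x ∈ range (y + 1), (x.descFactorial r * y.choose x) • Δ_[h] ^[x] f 0
      = y.descFactorial r • ∑ s ∈ range (r + 1), ((-1 : ℤ) ^ s * r.choose s) • f ((y - s) • h) := by
  rcases lt_or_ge y r with hyr | hry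
  · rw [Nat.descFactorial_of_lt hyr, zero_smul]
    refine sum_eq_zero fun x hx => ?_
    rw [Nat.descFactorial_of_lt (by grind), zero_mul, zero_smul]
  obtain ⟨t, rfl⟩ := Nat.exists_eq_add_of_le hry
  have hlow : ∑ x ∈ range r, (x.descFactorial r * (r + t).choose x) • Δ_[h] ^[x] f 0 = 0 :=
    sum_eq_zero fun x hx => by rw [Nat.descFactorial_of_lt (mem_range.mp hx), zero_mul, zero_smul]
  calc ∑ x ∈ range (r + t + 1), (x.descFactorial r * (r + t).choose x) • Δ_[h] ^[x] f 0
      = ∑ k ∈ range (t + 1), ((r + k).descFactorial r * (r + t).choose (r + k)) •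
          Δ_[h] ^[k] (Δ_[h] ^[r] f) 0 := by
        rw [add_assoc, sum_range_add, hlow, zero_add]
        simp only [← Function.iterate_add_apply, add_comm]
    _ = (r + t).descFactorial r •
          ∑ k ∈ range (t + 1), t.choose k • Δ_[h] ^[k] (Δ_[h] ^[r] f) 0 := by
        simp only [Nat.descFactorial_mul_choose_add, Nat.add_sub_cancel_left, mul_smul, smul_sum]
    _ = (r + t).descFactorial r • Δ_[h] ^[r] f (t • h) := by
        rw [← shift_eq_sum_fwdDiff_iter, zero_add]
    _ = _ := by
        rw [fwdDiff_iter_eq_sum_shift_reflect]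
        congr 1
        refine sum_congr rfl fun s hs => ?_
        rw [← add_smul, show t + (r - s) = r + t - s by grind]

end FwdDiff

open Polynomial

theorem rise_eq_eval_ascPochhammer (a : ℝ) (k : ℕ) : rise a k = (ascPochhammer ℝ k).eval a := by
  induction k with
  | zero => simp [rise]
  | succ k ih => simp [rise, prod_range_succ, ascPochhammer_succ_right, ← ih]

theorem fall_natCast_s11 (y k : ℕ) : fall y k = y.descFactorial k := by
  rw [fall, ← descPochhammer_eval_eq_prod_range, descPochhammer_eval_eq_descFactorial]

theorem fall_add (a : ℝ) (s t : ℕ) : fall a (s + t) = fall a s * fall (a - s) t := by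
  simp only [fall, prod_range_add, Nat.cast_add, sub_add_eq_sub_sub]

theorem fwdDiff_iter_rise_affine_eq_zero {a d : ℝ} {k x : ℕ} (hkx : k < x) :
    Δ_[1] ^[x] (fun t : ℝ => rise (a + t * d) k) = 0 := by
  set P : ℝ[X] := (ascPochhammer ℝ k).comp (C d * X + C a)
  have hP : (fun t : ℝ => rise (a + t * d) k) = P.eval := by
    funext t
    rw [rise_eq_eval_ascPochhammer, eval_comp]
    simp only [eval_add, eval_mul, eval_C, eval_X]
    ring_nf
  have hdeg : P.natDegree < x := calc
    P.natDegree ≤ (ascPochhammer ℝ k).natDegree * (C d * X + C a).natDegree := natDegree_comp_le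
    _ ≤ k * 1 := Nat.mul_le_mul (ascPochhammer_natDegree ℝ k).le natDegree_linear_le
    _ < x := by omega
  rw [hP, Polynomial.fwdDiff_iter_eq_zero_of_degree_lt hdeg]

theorem fall_sub_mul_factorial_mul_choose {y r s : ℕ} (hsr : s ≤ r) :
    fall ((y : ℝ) - s) (r - s) * s.factorial * y.choose s = y.descFactorial r := by
  rw [← fall_natCast_s11, ← Nat.add_sub_cancel' hsr, fall_add, fall_natCast_s11,
    Nat.descFactorial_eq_factorial_mul_choose, Nat.add_sub_cancel_left]
  push_cast
  ring

theorem stmt_11_general (n m m' l y r : ℕ) (θ : ℝ) :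
    ∑ x ∈ Finset.range (min y m' + 1),
      fall (x : ℝ) r *
        ((y.choose x : ℝ) / rise (θ + n + m) m' *
          ∑ i ∈ Finset.Icc (y - x) y,
            (-1 : ℝ) ^ (i - (y - x)) * (x.choose (y - i) : ℝ) *
              rise (θ + n + m - i * (1 + l)) m')
    = ∑ s ∈ Finset.range (r + 1),
        (r.choose s : ℝ) * (-1 : ℝ) ^ s * fall ((y : ℝ) - s) (r - s) *
          (s.factorial : ℝ) * (y.choose s) *
          rise (θ + n + m - s * (1 + l)) m' / rise (θ + n + m) m' := by
  set c : ℝ := θ + n + m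
  set g : ℝ → ℝ := fun t => rise (c - y * (1 + l) + t * (1 + l)) m'
  have hg : ∀ i ≤ y, g ((y - i) • 1) = rise (c - i * (1 + l)) m' := by
    intro i hi
    simp only [g, nsmul_eq_mul, mul_one, Nat.cast_sub hi]
    ring_nf
  have hpmf : ∀ x ≤ y, ∑ i ∈ Icc (y - x) y, (-1 : ℝ) ^ (i - (y - x)) * (x.choose (y - i) : ℝ) *
      rise (c - i * (1 + l)) m' = Δ_[1] ^[x] g 0 := by
    intro x hxy
    rw [← sum_Icc_choose_smul_eq_fwdDiff_iter 1 g hxy]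
    refine sum_congr rfl fun i hi => ?_
    rw [hg i (mem_Icc.mp hi).2, zsmul_eq_mul]
    push_cast
    ring
  calc _ = (∑ x ∈ range (y + 1), (x.descFactorial r * y.choose x) • Δ_[1] ^[x] g 0) /
          rise c m' := by
        rw [sum_div]
        refine sum_subset_zero_on_sdiff (range_subset_range.mpr (by omega)) ?_ ?_
        · intro x hx
          simp only [mem_sdiff, mem_range] at hx
          rw [fwdDiff_iter_rise_affine_eq_zero (by omega)]
          simp
        · intro x hx
          rw [hpmf x (by grind), fall_natCast_s11, nsmul_eq_mul]
          push_cast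
          ring
    _ = (y.descFactorial r • ∑ s ∈ range (r + 1),
          ((-1 : ℤ) ^ s * r.choose s) • g ((y - s) • 1)) / rise c m' := by
        rw [sum_descFactorial_mul_choose_smul_fwdDiff_iter]
    _ = _ := by
        rw [nsmul_eq_mul, mul_sum, sum_div]
        refine sum_congr rfl fun s hs => ?_
        have hsr : s ≤ r := Nat.lt_succ_iff.mp (mem_range.mp hs)
        rcases le_or_gt s y with hsy | hys
        · rw [zsmul_eq_mul, hg s hsy, ← fall_sub_mul_factorial_mul_choose hsr]
          push_cast
          ring
        · rw [Nat.choose_eq_zero_of_lt hys, Nat.descFactorial_of_lt (by omega)]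
          simp

theorem stmt_11 (n m m' l y r : ℕ) (hl : 1 ≤ l) (θ : ℝ) (hθ : 0 < θ) :
    ∑ x ∈ Finset.range (min y m' + 1),
      fall (x : ℝ) r *
        ((y.choose x : ℝ) / rise (θ + n + m) m' *
          ∑ i ∈ Finset.Icc (y - x) y,
            (-1 : ℝ) ^ (i - (y - x)) * (x.choose (y - i) : ℝ) *
              rise (θ + n + m - i * (1 + l)) m')
    = ∑ s ∈ Finset.range (r + 1),
        (r.choose s : ℝ) * (-1 : ℝ) ^ s * fall ((y : ℝ) - s) (r - s) *
          (s.factorial : ℝ) * (y.choose s) *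
          rise (θ + n + m - s * (1 + l)) m' / rise (θ + n + m) m' :=
  stmt_11_general n m m' l y r θ
end
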